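/- arXiv:math/9908110 — 4 statements merged into one kernel-verified Lean document; each statement's English description precedes it below -/
import Mathlib

section
/- Under the stated setup, suppose each scalar μ_{1i} (1 ≤ i ≤ d) is a real number, and suppose ι : M_d(ℂ) → M_d(ℂ) is a conjugate-linear map with ι(e_{A,i}) = e_{A,i} for all i and ι(e_{A,i}·e_{B,1}·e_{A,j}) = e_{A,j}·e_{B,1}·e_{A,i} for all i ≠ j. Then ι(e_{B,1}) = e_{B,1}. -/
/-! The braid relation gives `B = (AB) A (AB)⁻¹`, so `e_{B,1}`, like every `e_{A,i}`, is a rank-one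
idempotent `Q E₁₁ Q⁻¹`, and such an `E` satisfies `E X E = tr(E X) • E`. Since the `e_{A,i}` sum
to `1`, `e_{B,1} = ∑_{i,j} e_{A,i} e_{B,1} e_{A,j}`; `ι` permutes the off-diagonal terms, and the
diagonal term `tr(e_{A,i} e_{B,1}) • e_{A,i}` equals `μ_{1i} • e_{A,i}` (take traces in
`e_{B,1} e_{A,i} e_{B,1} = μ_{1i} • e_{B,1}`), which `ι` fixes because `μ_{1i}` is real. -/

open Matrix Polynomial

/-- The eigenprojection `e_{M,i} = ∏_{j ≠ i} (M - λ_j·I)/(λ_i - λ_j)` of a matrix `M`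
onto the `λ_i`-eigenspace. -/
noncomputable def eigProj {d : ℕ} (lam : Fin d → ℂ)
    (M : Matrix (Fin d) (Fin d) ℂ) (i : Fin d) : Matrix (Fin d) (Fin d) ℂ :=
  (∏ j ∈ Finset.univ.erase i, (lam i - lam j)⁻¹) •
    Polynomial.aeval M (∏ j ∈ Finset.univ.erase i, (X - C (lam j)))

theorem LinearMap.map_eq_self_of_peirce_swap {K A n : Type*} [Semiring K] [Semiring A]
    [Module K A] [Fintype n] {σ : K →+* K} (ι : A →ₛₗ[σ] A) {e : n → A}
    (he : ∑ i, e i = 1) {f : A} {c : n → K} (hc : ∀ i, σ (c i) = c i)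
    (hdiag : ∀ i, e i * f * e i = c i • e i) (hfix : ∀ i, ι (e i) = e i)
    (hswap : ∀ i j, i ≠ j → ι (e i * f * e j) = e j * f * e i) :
    ι f = f := by
  have peirce : f = ∑ i, ∑ j, e i * f * e j := by
    simp_rw [← Finset.mul_sum, ← Finset.sum_mul, he, one_mul, mul_one]
  have hterm : ∀ i j, ι (e i * f * e j) = e j * f * e i := by
    intro i j
    rcases eq_or_ne i j with rfl | hij
    · rw [hdiag, map_smulₛₗ, hc, hfix]
    · exact hswap i j hij
  conv_lhs => rw [peirce]
  simp_rw [map_sum, hterm]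
  rw [Finset.sum_comm, ← peirce]

theorem Polynomial.aeval_units_conj {R A : Type*} [CommSemiring R] [Semiring A] [Algebra R A]
    (u : Aˣ) (x : A) (p : R[X]) : aeval (u * x * ↑u⁻¹) p = u * aeval x p * ↑u⁻¹ := by
  simpa [ConjAct.units_smul_def] using
    aeval_algHom_apply (MulSemiringAction.toAlgHom R A (ConjAct.toConjAct u)) x p

namespace Matrix

variable {n R : Type*} [Fintype n] [DecidableEq n]

theorem aeval_conj [CommRing R] {Q : Matrix n n R} (hQ : IsUnit Q) (M : Matrix n n R)
    (p : R[X]) : aeval (Q * M * Q⁻¹) p = Q * aeval M p * Q⁻¹ := by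
  obtain ⟨u, rfl⟩ := hQ
  simpa [coe_units_inv] using Polynomial.aeval_units_conj u M p

theorem conj_single_mul_mul_conj_single [CommSemiring R] (Q Q' X : Matrix n n R) (i : n) :
    Q * single i i 1 * Q' * X * (Q * single i i 1 * Q')
      = trace (Q * single i i 1 * Q' * X) • (Q * single i i 1 * Q') := by
  have htrace : trace (Q * single i i 1 * Q' * X) = (Q' * X * Q) i i := by
    rw [Matrix.mul_assoc, Matrix.mul_assoc, trace_mul_comm, Matrix.mul_assoc,
      trace_single_mul, one_smul, Matrix.mul_assoc]
  calc Q * single i i 1 * Q' * X * (Q * single i i 1 * Q')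
      = Q * (single i i 1 * (Q' * X * Q) * single i i 1) * Q' := by
        simp only [Matrix.mul_assoc]
    _ = _ := by
        rw [single_mul_mul_single, htrace, one_mul, mul_one, ← Matrix.smul_mul,
          ← Matrix.mul_smul, smul_single, smul_eq_mul, mul_one]

theorem trace_conj_single [CommRing R] {Q : Matrix n n R} (hQ : IsUnit Q) (i : n) :
    trace (Q * single i i 1 * Q⁻¹) = 1 := by
  rw [trace_mul_cycle, nonsing_inv_mul _ ((isUnit_iff_isUnit_det Q).mp hQ), Matrix.one_mul,
    trace_single_eq_same]

theorem eq_conj_of_braid [CommRing R] {A B : Matrix n n R} (hAB : IsUnit (A * B))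
    (hbraid : A * B * A = B * A * B) : B = A * B * A * (A * B)⁻¹ := by
  rw [hbraid, Matrix.mul_assoc B A B,
    mul_nonsing_inv_cancel_right _ _ ((isUnit_iff_isUnit_det _).mp hAB)]

end Matrix

theorem eigProj_eq_aeval_basis {d : ℕ} (lam : Fin d → ℂ) (M : Matrix (Fin d) (Fin d) ℂ)
    (i : Fin d) : eigProj lam M i = aeval M (Lagrange.basis Finset.univ lam i) := by
  rw [eigProj, Lagrange.basis]
  simp only [Lagrange.basisDivisor, Finset.prod_mul_distrib, ← map_prod, map_mul, aeval_C,
    Algebra.smul_def]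

theorem sum_eigProj {d : ℕ} {lam : Fin d → ℂ} (hinj : Function.Injective lam)
    (M : Matrix (Fin d) (Fin d) ℂ) : ∑ i, eigProj lam M i = 1 := by
  rcases Nat.eq_zero_or_pos d with rfl | hd
  · exact Subsingleton.elim _ _
  simp_rw [eigProj_eq_aeval_basis, ← map_sum,
    Lagrange.sum_basis hinj.injOn ⟨⟨0, hd⟩, Finset.mem_univ _⟩, map_one]

theorem eigProj_diagonal {d : ℕ} {lam : Fin d → ℂ} (hinj : Function.Injective lam) (i : Fin d) :
    eigProj lam (diagonal lam) i = single i i 1 := by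
  rw [eigProj_eq_aeval_basis, ← diagonalAlgHom_apply ℂ, aeval_algHom_apply,
    diagonalAlgHom_apply, ← diagonal_single]
  congr 1
  ext k
  rcases eq_or_ne k i with rfl | hki
  · simpa using Lagrange.eval_basis_self hinj.injOn (Finset.mem_univ k)
  · simpa [hki] using Lagrange.eval_basis_of_ne hki.symm (Finset.mem_univ k)

theorem eigProj_conj {d : ℕ} (lam : Fin d → ℂ) {Q : Matrix (Fin d) (Fin d) ℂ} (hQ : IsUnit Q)
    (M : Matrix (Fin d) (Fin d) ℂ) (i : Fin d) :
    eigProj lam (Q * M * Q⁻¹) i = Q * eigProj lam M i * Q⁻¹ := by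
  simp only [eigProj_eq_aeval_basis, aeval_conj hQ]

/-- if the scalars `μ_{1i}` are real and `ι` is a conjugate-linear map fixing
the `e_{A,i}` and swapping `e_{A,i}·e_{B,1}·e_{A,j}` with `e_{A,j}·e_{B,1}·e_{A,i}`,
then `ι(e_{B,1}) = e_{B,1}`. -/
theorem iota_fixes_eB1 {d : ℕ} (hd : 1 ≤ d)
    (A B : Matrix (Fin d) (Fin d) ℂ)
    (hA : IsUnit A) (hB : IsUnit B)
    (hbraid : A * B * A = B * A * B)
    (lam : Fin d → ℂ) (hinj : Function.Injective lam)
    (P : Matrix (Fin d) (Fin d) ℂ) (hP : IsUnit P)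
    (hdiag : A = P * Matrix.diagonal lam * P⁻¹)
    (μ : Fin d → Fin d → ℂ)
    (hμ : ∀ i j, eigProj lam B i * eigProj lam A j * eigProj lam B i
        = μ i j • eigProj lam B i)
    (hreal : ∀ i, ∃ r : ℝ, μ (⟨0, hd⟩ : Fin d) i = (r : ℂ))
    (ι : Matrix (Fin d) (Fin d) ℂ → Matrix (Fin d) (Fin d) ℂ)
    (hadd : ∀ X Y, ι (X + Y) = ι X + ι Y)
    (hsmul : ∀ (c : ℂ) X, ι (c • X) = (starRingEnd ℂ c) • ι X)
    (hfix : ∀ i, ι (eigProj lam A i) = eigProj lam A i)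
    (hswap : ∀ i j, i ≠ j →
      ι (eigProj lam A i * eigProj lam B ⟨0, hd⟩ * eigProj lam A j)
        = eigProj lam A j * eigProj lam B ⟨0, hd⟩ * eigProj lam A i) :
    ι (eigProj lam B ⟨0, hd⟩) = eigProj lam B ⟨0, hd⟩ := by
  set i₀ : Fin d := ⟨0, hd⟩
  have heA : ∀ i, eigProj lam A i = P * single i i 1 * P⁻¹ := fun i => by
    rw [hdiag, eigProj_conj lam hP, eigProj_diagonal hinj]
  have hQ : IsUnit (A * B * P) := (hA.mul hB).mul hP
  have heB : eigProj lam B i₀ = A * B * P * single i₀ i₀ 1 * (A * B * P)⁻¹ := by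
    conv_lhs => rw [eq_conj_of_braid (hA.mul hB) hbraid, eigProj_conj lam (hA.mul hB), heA]
    simp only [Matrix.mul_inv_rev, Matrix.mul_assoc]
  have hμ_eq : ∀ i, μ i₀ i = trace (eigProj lam A i * eigProj lam B i₀) := fun i => by
    have h := congrArg trace (hμ i₀ i)
    rw [heB, conj_single_mul_mul_conj_single, trace_smul, trace_smul,
      trace_conj_single hQ, ← heB, trace_mul_comm, smul_eq_mul, smul_eq_mul, mul_one,
      mul_one] at h
    exact h.symm
  let ι' : Matrix (Fin d) (Fin d) ℂ →ₗ⋆[ℂ] Matrix (Fin d) (Fin d) ℂ :=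
    { toFun := ι, map_add' := hadd, map_smul' := hsmul }
  refine ι'.map_eq_self_of_peirce_swap (sum_eigProj hinj A) (c := fun i => μ i₀ i)
    (fun i => ?_) (fun i => ?_) hfix hswap
  · obtain ⟨r, hr⟩ := hreal i
    simp only [hr, Complex.conj_ofReal]
  · rw [hμ_eq, heA, conj_single_mul_mul_conj_single]
end

section
/- Let λ_1, λ_2 ∈ ℂ with λ_1 ≠ λ_2 and |λ_1| = |λ_2| = 1. Then the complex number μ := (λ_1² − λ_1·λ_2 + λ_2²)/(λ_1 − λ_2)² is real and equals 1 − |λ_1/λ_2 − 1|^{-2}; consequently μ > 0 if and only if |λ_1/λ_2 − 1| > 1. -/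
/-!
For unit complex numbers `a, b` one has `conj a = a⁻¹`, so
`‖a - b‖² = (a - b)(a⁻¹ - b⁻¹) = -(a - b)² / (a b)`. Writing
`a² - a b + b² = (a - b)² + a b` then gives `μ = 1 + a b / (a - b)² = 1 - ‖a - b‖⁻²`,
and `‖a / b - 1‖ = ‖a - b‖` because `‖b‖ = 1`.
-/

namespace Complex

theorem sq_sub_eq_neg_mul_mul_sq_norm {a b : ℂ} (ha : ‖a‖ = 1) (hb : ‖b‖ = 1) :
    (a - b) ^ 2 = -(a * b) * (‖a - b‖ ^ 2 : ℝ) := by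
  have ha₀ : a ≠ 0 := norm_ne_zero_iff.mp (by rw [ha]; exact one_ne_zero)
  have hb₀ : b ≠ 0 := norm_ne_zero_iff.mp (by rw [hb]; exact one_ne_zero)
  rw [← normSq_eq_norm_sq, ← mul_conj, map_sub, ← inv_eq_conj ha, ← inv_eq_conj hb]
  field_simp
  ring

theorem norm_div_sub_one_of_norm_eq_one {a b : ℂ} (hb : ‖b‖ = 1) :
    ‖a / b - 1‖ = ‖a - b‖ := by
  have hb₀ : b ≠ 0 := norm_ne_zero_iff.mp (by rw [hb]; exact one_ne_zero)
  rw [← div_self hb₀, ← sub_div, norm_div, hb, div_one]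

theorem sq_sub_mul_add_sq_div_sq_sub {a b : ℂ} (hab : a ≠ b) (ha : ‖a‖ = 1) (hb : ‖b‖ = 1) :
    (a ^ 2 - a * b + b ^ 2) / (a - b) ^ 2 = ((1 - (‖a - b‖ ^ 2)⁻¹ : ℝ) : ℂ) := by
  have hsq := sq_sub_eq_neg_mul_mul_sq_norm ha hb
  have hab₀ : (a - b) ^ 2 ≠ 0 := pow_ne_zero 2 (sub_ne_zero.mpr hab)
  have hmul : a * b ≠ 0 := by
    rintro h
    exact hab₀ (by rw [hsq, h, neg_zero, zero_mul])
  calc (a ^ 2 - a * b + b ^ 2) / (a - b) ^ 2 = 1 + a * b / (a - b) ^ 2 := by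
        field_simp
        ring
    _ = 1 - ((‖a - b‖ ^ 2 : ℝ) : ℂ)⁻¹ := by
        rw [hsq, neg_mul, div_neg, div_mul_cancel_left₀ hmul, ← sub_eq_add_neg]
    _ = ((1 - (‖a - b‖ ^ 2)⁻¹ : ℝ) : ℂ) := by push_cast; rfl

end Complex

theorem Real.one_sub_inv_sq_pos_iff {t : ℝ} (ht : 0 < t) : 0 < 1 - (t ^ 2)⁻¹ ↔ 1 < t := by
  rw [sub_pos, inv_lt_one₀ (by positivity), one_lt_sq_iff₀ ht.le]

/-- for distinct modulus-1 complex numbers `λ₁, λ₂`, the quantity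
`μ = (λ₁² − λ₁λ₂ + λ₂²)/(λ₁ − λ₂)²` is real, equals `1 − |λ₁/λ₂ − 1|⁻²`, and is positive
iff `|λ₁/λ₂ − 1| > 1`. -/
theorem mu2_real_formula (l1 l2 : ℂ) (hne : l1 ≠ l2)
    (h1 : ‖l1‖ = 1) (h2 : ‖l2‖ = 1) :
    ∃ r : ℝ, (l1 ^ 2 - l1 * l2 + l2 ^ 2) / (l1 - l2) ^ 2 = (r : ℂ) ∧
      r = 1 - ((‖l1 / l2 - 1‖) ^ 2)⁻¹ ∧
      (0 < r ↔ 1 < ‖l1 / l2 - 1‖) := by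
  rw [Complex.norm_div_sub_one_of_norm_eq_one h2]
  exact ⟨_, Complex.sq_sub_mul_add_sq_div_sq_sub hne h1 h2, rfl,
    Real.one_sub_inv_sq_pos_iff (norm_pos_iff.mpr (sub_ne_zero.mpr hne))⟩
end

section
/- Let 1 ≤ d ≤ 5 and let A, B ∈ M_d(ℂ) be a simple d-dimensional representation of B_3. Then the minimal polynomial of A coincides with the characteristic polynomial of A, and likewise for B. Consequently, if A is diagonalizable then A has d pairwise distinct eigenvalues. -/
open Polynomial Finset Matrix

section helpers

variable {K A : Type*} [Field K] [Ring A] [Algebra K A]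

/-- conjugation algebra automorphism -/
def conjAE (u : Aˣ) : A ≃ₐ[K] A where
  toFun x := ↑u * x * ↑u⁻¹
  invFun x := ↑u⁻¹ * x * ↑u
  left_inv x := by simp [mul_assoc]
  right_inv x := by simp [mul_assoc]
  map_mul' x y := by simp [mul_assoc]
  map_add' x y := by simp [mul_add, add_mul]
  commutes' r := by simp [Algebra.algebraMap_eq_smul_one, mul_smul_comm, smul_mul_assoc]

lemma minpoly_conj (u : Aˣ) (x : A) : minpoly K (↑u * x * ↑u⁻¹) = minpoly K x :=
  minpoly.algEquiv_eq (conjAE (K := K) u) x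

lemma minpoly_coeff_zero_ne [Nontrivial A] (x : Aˣ) (hint : IsIntegral K (x : A)) :
    (minpoly K (x : A)).coeff 0 ≠ 0 := by
  intro h0
  obtain ⟨q, hq⟩ : (X : K[X]) ∣ minpoly K (x : A) := X_dvd_iff.mpr h0
  have hmon := minpoly.monic hint
  have hqmon : q.Monic := by
    rw [hq] at hmon; exact monic_X.of_mul_monic_left hmon
  have haev : aeval (x : A) (minpoly K (x : A)) = 0 := minpoly.aeval _ _
  rw [hq, _root_.map_mul, aeval_X] at haev
  have hq0 : aeval (x : A) q = 0 := by
    have := congrArg (fun y => (↑x⁻¹ : A) * y) haev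
    simpa [← mul_assoc] using this
  have hmin := minpoly.min (A := K) (x := (x : A)) hqmon hq0
  have h1 : (minpoly K (x : A)).natDegree = 1 + q.natDegree := by
    rw [hq, natDegree_mul X_ne_zero hqmon.ne_zero, natDegree_X]
  have h2 : (minpoly K (x : A)).natDegree ≤ q.natDegree :=
    natDegree_le_natDegree hmin
  omega

lemma laurent_mem_span [Nontrivial A] (x : Aˣ) (hint : IsIntegral K (x : A)) (m : ℤ) (k : ℤ) :
    (↑(x ^ k) : A) ∈ Submodule.span K
      ((fun i : ℕ => (↑(x ^ (m + i)) : A)) '' Set.Iio (minpoly K (x : A)).natDegree) := by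
  set μ := minpoly K (x : A) with hμ
  set p := μ.natDegree with hpdef
  have hp : 0 < p := minpoly.natDegree_pos hint
  set W := Submodule.span K ((fun i : ℕ => (↑(x ^ (m + i)) : A)) '' Set.Iio p) with hW
  have hgen : ∀ i : ℕ, i < p → (↑(x ^ (m + i)) : A) ∈ W := fun i hi =>
    Submodule.subset_span ⟨i, hi, rfl⟩
  have hpow : ∀ (j : ℤ) (i : ℕ), (↑(x ^ (j + i)) : A) = ↑(x ^ j) * (↑x : A) ^ i := by
    intro j i
    rw [_root_.zpow_add, zpow_natCast, Units.val_mul, Units.val_pow_eq_pow_val]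
  have hxp : ((↑x : A)) ^ p = ∑ i ∈ range p, (-(μ.coeff i)) • (↑x : A) ^ i := by
    have h1 : (0 : A) = ∑ i ∈ range (p + 1), μ.coeff i • (↑x : A) ^ i := by
      rw [← aeval_eq_sum_range (p := μ) (↑x : A)]
      exact (minpoly.aeval _ _).symm
    rw [Finset.sum_range_succ] at h1
    have hmonμ : μ.Monic := minpoly.monic hint
    have hcp : μ.coeff p • (↑x : A) ^ p = (↑x : A) ^ p := by
      rw [hpdef, hmonμ.coeff_natDegree, one_smul]
    rw [hcp] at h1
    have h2 := eq_neg_of_add_eq_zero_right h1.symm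
    rw [h2, ← Finset.sum_neg_distrib]
    exact Finset.sum_congr rfl fun i _ => (neg_smul _ _).symm
  have hrel : ∀ j : ℤ, (↑(x ^ (j + p)) : A) = ∑ i ∈ range p, (-(μ.coeff i)) • (↑(x ^ (j + i)) : A) := by
    intro j
    calc (↑(x ^ (j + p)) : A) = ↑(x ^ j) * (↑x : A) ^ p := hpow j p
    _ = ∑ i ∈ range p, (-(μ.coeff i)) • (↑(x ^ j) * (↑x : A) ^ i) := by
        rw [hxp, Finset.mul_sum]; simp [mul_smul_comm]
    _ = ∑ i ∈ range p, (-(μ.coeff i)) • (↑(x ^ (j + i)) : A) := by simp [hpow]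
  have hup : ∀ n : ℕ, (↑(x ^ (m + n)) : A) ∈ W := by
    intro n
    induction n using Nat.strong_induction_on with
    | _ n ih =>
      by_cases h : n < p
      · exact hgen n h
      · have he : (m + n : ℤ) = (m + (n - p : ℕ)) + p := by push_cast; omega
        rw [he, hrel]
        refine Submodule.sum_mem _ fun i hi => Submodule.smul_mem _ _ ?_
        have hi' : i < p := mem_range.mp hi
        have he2 : (m + (n - p : ℕ) : ℤ) + i = m + ((n - p + i : ℕ) : ℤ) := by push_cast; omega
        rw [he2]
        exact ih _ (by omega)
  have hdown : ∀ n : ℕ, (↑(x ^ (m - n)) : A) ∈ W := by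
    intro n
    induction n using Nat.strong_induction_on with
    | _ n ih =>
      rcases Nat.eq_zero_or_pos n with rfl | hn
      · simpa using hup 0
      · have hmem : ∀ i : ℕ, 1 ≤ i → i ≤ p → (↑(x ^ (m - n + i)) : A) ∈ W := by
          intro i h1 h2
          rcases le_or_gt i n with h | h
          · have he : (m - n + i : ℤ) = m - ((n - i : ℕ) : ℤ) := by push_cast; omega
            rw [he]; exact ih _ (by omega)
          · have he : (m - n + i : ℤ) = m + ((i - n : ℕ) : ℤ) := by push_cast; omega
            rw [he]; exact hup _
        have hrelj := hrel (m - n)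
        have hsplit : ∑ i ∈ range p, (-(μ.coeff i)) • (↑(x ^ ((m - n) + i)) : A)
            = (-(μ.coeff 0)) • (↑(x ^ (m - n)) : A)
              + ∑ i ∈ Ico 1 p, (-(μ.coeff i)) • (↑(x ^ ((m - n) + i)) : A) := by
          rw [range_eq_Ico, Finset.sum_eq_sum_Ico_succ_bot hp]
          simp
        rw [hsplit] at hrelj
        have hc0 : (-(μ.coeff 0)) ≠ 0 := by
          simpa using minpoly_coeff_zero_ne x hint
        have hsolve : (↑(x ^ (m - n)) : A) = (-(μ.coeff 0))⁻¹ •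
            ((↑(x ^ ((m - n) + p)) : A) - ∑ i ∈ Ico 1 p, (-(μ.coeff i)) • (↑(x ^ ((m - n) + i)) : A)) := by
          rw [hrelj, add_sub_cancel_right, smul_smul, inv_mul_cancel₀ hc0, one_smul]
        rw [hsolve]
        refine Submodule.smul_mem _ _ (Submodule.sub_mem _ ?_ ?_)
        · exact hmem p hp le_rfl
        · refine Submodule.sum_mem _ fun i hi => Submodule.smul_mem _ _ ?_
          have hi' := Finset.mem_Ico.mp hi
          exact hmem i hi'.1 (le_of_lt hi'.2)
  rcases le_or_gt m k with h | h
  · have : k = m + ((k - m).toNat : ℤ) := by omega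
    rw [this]; exact hup _
  · have : k = m - ((m - k).toNat : ℤ) := by omega
    rw [this]; exact hdown _

end helpers

section helpers2

variable {A : Type*} [Ring A] [Algebra ℂ A]

lemma mem_of_span {S : Set A} {y : A} {T : Submodule ℂ A}
    (hy : y ∈ Submodule.span ℂ S) (hT : ∀ z ∈ S, z ∈ T) : y ∈ T :=
  Submodule.span_le.mpr hT hy

lemma mem_span_mul_left (x : A) {S : Set A} {y : A} {T : Submodule ℂ A}
    (hy : y ∈ Submodule.span ℂ S) (hT : ∀ z ∈ S, x * z ∈ T) : x * y ∈ T := by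
  have h := Submodule.apply_mem_span_image_of_mem_span (LinearMap.mulLeft ℂ x) hy
  refine Submodule.span_le.mpr ?_ h
  rintro _ ⟨z, hz, rfl⟩
  exact hT z hz

lemma mem_span_mul_right (x : A) {S : Set A} {y : A} {T : Submodule ℂ A}
    (hy : y ∈ Submodule.span ℂ S) (hT : ∀ z ∈ S, z * x ∈ T) : y * x ∈ T := by
  have h := Submodule.apply_mem_span_image_of_mem_span (LinearMap.mulRight ℂ x) hy
  refine Submodule.span_le.mpr ?_ h
  rintro _ ⟨z, hz, rfl⟩
  exact hT z hz

lemma mem_span_mul_both (x x' : A) {S : Set A} {y : A} {T : Submodule ℂ A}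
    (hy : y ∈ Submodule.span ℂ S) (hT : ∀ z ∈ S, x * z * x' ∈ T) : x * y * x' ∈ T := by
  have h := Submodule.apply_mem_span_image_of_mem_span
    (LinearMap.mulRight ℂ x' ∘ₗ LinearMap.mulLeft ℂ x) hy
  have h2 : (LinearMap.mulRight ℂ x' ∘ₗ LinearMap.mulLeft ℂ x) y = x * y * x' := by simp
  rw [h2] at h
  refine Submodule.span_le.mpr ?_ h
  rintro _ ⟨z, hz, rfl⟩
  simpa using hT z hz

end helpers2

set_option maxHeartbeats 2000000 in
theorem key_degree {d : ℕ} (hd : 1 ≤ d) (hd5 : d ≤ 5)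
    (A B : Matrix (Fin d) (Fin d) ℂ)
    (hA : IsUnit A) (hB : IsUnit B)
    (hbraid : A * B * A = B * A * B)
    (hsimple : Algebra.adjoin ℂ ({A, B} : Set (Matrix (Fin d) (Fin d) ℂ)) = ⊤) :
    d ≤ (minpoly ℂ A).natDegree := by
  haveI : NeZero d := ⟨by omega⟩
  by_contra hcon
  push_neg at hcon
  obtain ⟨u, rfl⟩ := hA
  obtain ⟨w, rfl⟩ := hB
  set Mat := Matrix (Fin d) (Fin d) ℂ with hMat
  set p := (minpoly ℂ (↑u : Mat)).natDegree with hpdef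
  have hintu : IsIntegral ℂ (↑u : Mat) := IsIntegral.of_finite ℂ _
  have hintw : IsIntegral ℂ (↑w : Mat) := IsIntegral.of_finite ℂ _
  have hp1 : 1 ≤ p := minpoly.natDegree_pos hintu
  have hp4 : p ≤ 4 := by omega
  -- units setup
  have hbu : u * w * u = w * u * w := Units.ext (by simpa [Units.val_mul] using hbraid)
  obtain ⟨ε, hε⟩ : ∃ ε : Matˣ, ε = u * w * u := ⟨_, rfl⟩
  obtain ⟨ζ, hζ⟩ : ∃ ζ : Matˣ, ζ = ε * ε := ⟨_, rfl⟩
  have hεu : ε * u = w * ε := by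
    calc ε * u = (w * u * w) * u := by rw [hε, hbu]
    _ = w * ε := by rw [hε]; group
  have hεw : ε * w = u * ε := by
    calc ε * w = u * (w * u * w) := by rw [hε]; group
    _ = u * ε := by rw [hε, hbu]
  have hwdef : w = u⁻¹ * ε * u⁻¹ := by rw [hε]; group
  have hw2 : w ^ (2 : ℤ) = u⁻¹ * ε * u⁻¹ * (u⁻¹ * ε * u⁻¹) := by
    rw [zpow_two, hwdef]
  have hcu : ∀ k : ℤ, ε * u ^ k = w ^ k * ε := by
    intro k
    have h1 : (MulAut.conj ε) u = w := by
      rw [MulAut.conj_apply, hεu, mul_inv_cancel_right]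
    have h2 : (MulAut.conj ε) (u ^ k) = w ^ k := by rw [map_zpow, h1]
    rw [MulAut.conj_apply] at h2
    calc ε * u ^ k = (ε * u ^ k * ε⁻¹) * ε := by group
    _ = w ^ k * ε := by rw [h2]
  have hcw : ∀ k : ℤ, ε * w ^ k = u ^ k * ε := by
    intro k
    have h1 : (MulAut.conj ε) w = u := by
      rw [MulAut.conj_apply, hεw, mul_inv_cancel_right]
    have h2 : (MulAut.conj ε) (w ^ k) = u ^ k := by rw [map_zpow, h1]
    rw [MulAut.conj_apply] at h2
    calc ε * w ^ k = (ε * w ^ k * ε⁻¹) * ε := by group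
    _ = u ^ k * ε := by rw [h2]
  have hCu : Commute ζ u := by
    show ζ * u = u * ζ
    rw [hζ]
    calc ε * ε * u = ε * (ε * u) := by group
    _ = (ε * w) * ε := by rw [hεu]; group
    _ = u * (ε * ε) := by rw [hεw]; group
  have hCw : Commute ζ w := by
    show ζ * w = w * ζ
    rw [hζ]
    calc ε * ε * w = ε * (ε * w) := by group
    _ = (ε * u) * ε := by rw [hεw]; group
    _ = w * (ε * ε) := by rw [hεu]; group
  -- ζ = δ² is a scalar matrix
  have hcent : ∀ x : Mat, x ∈ Subalgebra.centralizer ℂ {(↑ζ : Mat)} := by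
    intro x
    have hle : Algebra.adjoin ℂ ({(↑u : Mat), (↑w : Mat)} : Set Mat)
        ≤ Subalgebra.centralizer ℂ {(↑ζ : Mat)} := by
      apply Algebra.adjoin_le
      rintro y (rfl | rfl)
      · intro z hz
        rw [Set.mem_singleton_iff] at hz
        subst hz
        simpa [Units.val_mul] using congrArg Units.val hCu.eq
      · intro z hz
        rw [Set.mem_singleton_iff] at hz
        subst hz
        simpa [Units.val_mul] using congrArg Units.val hCw.eq
    exact hle (hsimple.symm ▸ Algebra.mem_top)
  obtain ⟨c, hc⟩ : ∃ c : ℂ, (↑ζ : Mat) = c • 1 := by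
    obtain ⟨r, hr⟩ := Matrix.mem_range_scalar_of_commute_single
      (M := (↑ζ : Mat)) (fun i j _ => by
        have := (Subalgebra.mem_centralizer_iff ℂ).mp (hcent (Matrix.single i j 1)) _
          (Set.mem_singleton _)
        exact this.symm)
    exact ⟨r, by rw [← hr, Matrix.scalar_apply, Matrix.smul_one_eq_diagonal]⟩
  have hc0 : c ≠ 0 := by
    intro h
    rw [h, zero_smul] at hc
    have h1 : (↑(ζ⁻¹) : Mat) * (↑ζ : Mat) = 1 := by
      rw [← Units.val_mul, inv_mul_cancel, Units.val_one]
    rw [hc, mul_zero] at h1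
    exact zero_ne_one h1
  have hεinv : (↑(ε⁻¹) : Mat) = c⁻¹ • (↑ε : Mat) := by
    have h1 : (↑(ε⁻¹) : Mat) * (↑ζ : Mat) = (↑ε : Mat) := by
      rw [← Units.val_mul]; congr 1; rw [hζ]; group
    rw [hc, mul_smul_comm, mul_one] at h1
    rw [← h1, smul_smul, inv_mul_cancel₀ hc0, one_smul]
  have hζinv : (↑(ζ⁻¹) : Mat) = c⁻¹ • (1 : Mat) := by
    have h1 : (↑(ζ⁻¹) : Mat) * (↑ζ : Mat) = 1 := by
      rw [← Units.val_mul, inv_mul_cancel, Units.val_one]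
    rw [hc, mul_smul_comm, mul_one] at h1
    rw [← h1, smul_smul, inv_mul_cancel₀ hc0, one_smul]
  -- minpoly of w
  have hminw : (minpoly ℂ (↑w : Mat)).natDegree = p := by
    have hwc : w = ε * u * ε⁻¹ := by rw [eq_mul_inv_iff_mul_eq]; exact hεu.symm
    have hwM : (↑w : Mat) = (↑ε : Mat) * (↑u : Mat) * (↑(ε⁻¹) : Mat) := by
      rw [hwc, Units.val_mul, Units.val_mul]
    rw [hwM, minpoly_conj ε (↑u : Mat)]
  -- generators
  set G : Finset Mat :=
    ((range p).image fun i : ℕ => (↑(u ^ (i : ℤ)) : Mat)) ∪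
    ((range p ×ˢ range p).image fun ij : ℕ × ℕ =>
      (↑(u ^ (ij.1 : ℤ)) : Mat) * (↑ε : Mat) * (↑(u ^ (ij.2 : ℤ)) : Mat)) ∪
    ((range p).image fun t : ℕ => (↑(w ^ (2 : ℤ)) : Mat) * (↑(u ^ (t : ℤ)) : Mat)) with hG
  set T := Submodule.span ℂ (G : Set Mat) with hT
  have hGmem1 : ∀ i : ℕ, i < p → (↑(u ^ (i : ℤ)) : Mat) ∈ T := by
    intro i hi
    refine Submodule.subset_span ?_
    rw [hG]
    simp only [Finset.coe_union, Set.mem_union, Finset.coe_image, Set.mem_image,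
      Finset.mem_coe, Finset.mem_range]
    exact Or.inl (Or.inl ⟨i, hi, rfl⟩)
  have hGmem2 : ∀ i j : ℕ, i < p → j < p →
      (↑(u ^ (i : ℤ)) : Mat) * (↑ε : Mat) * (↑(u ^ (j : ℤ)) : Mat) ∈ T := by
    intro i j hi hj
    refine Submodule.subset_span ?_
    rw [hG]
    simp only [Finset.coe_union, Set.mem_union, Finset.coe_image, Set.mem_image,
      Finset.mem_coe, Finset.mem_product, Finset.mem_range]
    exact Or.inl (Or.inr ⟨⟨i, j⟩, ⟨hi, hj⟩, rfl⟩)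
  have hGmem3 : ∀ t : ℕ, t < p → (↑(w ^ (2 : ℤ)) : Mat) * (↑(u ^ (t : ℤ)) : Mat) ∈ T := by
    intro t ht
    refine Submodule.subset_span ?_
    rw [hG]
    simp only [Finset.coe_union, Set.mem_union, Finset.coe_image, Set.mem_image,
      Finset.mem_coe, Finset.mem_range]
    exact Or.inr ⟨t, ht, rfl⟩
  -- Laurent spans
  have hLu : ∀ m k : ℤ, (↑(u ^ k) : Mat) ∈ Submodule.span ℂ
      ((fun i : ℕ => (↑(u ^ (m + i)) : Mat)) '' Set.Iio p) :=
    fun m k => laurent_mem_span u hintu m k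
  have hLw : ∀ m k : ℤ, (↑(w ^ k) : Mat) ∈ Submodule.span ℂ
      ((fun i : ℕ => (↑(w ^ (m + i)) : Mat)) '' Set.Iio p) := by
    intro m k
    have := laurent_mem_span w hintw m k
    rwa [hminw] at this
  -- F1
  have hF1 : ∀ s : ℤ, (↑(u ^ s) : Mat) ∈ T := by
    intro s
    refine mem_of_span (hLu 0 s) ?_
    rintro z ⟨i, hi, rfl⟩
    simp only [Set.mem_Iio] at hi
    beta_reduce
    rw [zero_add]
    exact hGmem1 i hi
  -- F2
  have hF2 : ∀ s t : ℤ, (↑(u ^ s) : Mat) * (↑ε : Mat) * (↑(u ^ t) : Mat) ∈ T := by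
    intro s t
    rw [mul_assoc]
    refine mem_span_mul_right _ (hLu 0 s) ?_
    rintro z ⟨i, hi, rfl⟩
    simp only [Set.mem_Iio] at hi
    beta_reduce
    rw [zero_add, ← mul_assoc]
    refine mem_span_mul_left _ (hLu 0 t) ?_
    rintro z ⟨j, hj, rfl⟩
    simp only [Set.mem_Iio] at hj
    beta_reduce
    rw [zero_add]
    exact hGmem2 i j hi hj
  -- F3
  have hF3 : ∀ s : ℤ, (↑(w ^ (2 : ℤ)) : Mat) * (↑(u ^ s) : Mat) ∈ T := by
    intro s
    refine mem_span_mul_left _ (hLu 0 s) ?_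
    rintro z ⟨i, hi, rfl⟩
    simp only [Set.mem_Iio] at hi
    beta_reduce
    rw [zero_add]
    exact hGmem3 i hi
  -- F4 : B^k A^s ∈ T
  have hF4 : ∀ k s : ℤ, (↑(w ^ k) : Mat) * (↑(u ^ s) : Mat) ∈ T := by
    intro k s
    refine mem_span_mul_right _ (hLw (-1) k) ?_
    rintro z ⟨i, hi, rfl⟩
    simp only [Set.mem_Iio] at hi
    beta_reduce
    have hi3 : i ≤ 3 := by omega
    set j : ℤ := -1 + (i : ℤ) with hj
    have hj1 : -1 ≤ j := by omega
    have hj2 : j ≤ 2 := by omega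
    clear_value j
    clear hj hi hi3
    interval_cases j
    · have hid : w ^ (-1 : ℤ) * u ^ s = u ^ (1 : ℤ) * ε⁻¹ * u ^ (1 + s) := by
        rw [hwdef]; group
      have hidM := congrArg Units.val hid
      simp only [Units.val_mul] at hidM
      rw [hidM, hεinv, mul_smul_comm, smul_mul_assoc]
      exact T.smul_mem _ (hF2 1 (1 + s))
    · simp only [zpow_zero, Units.val_one, one_mul]
      exact hF1 s
    · have hid : w ^ (1 : ℤ) * u ^ s = u ^ (-1 : ℤ) * ε * u ^ (s - 1) := by
        rw [hwdef]; group
      have hidM := congrArg Units.val hid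
      simp only [Units.val_mul] at hidM
      rw [hidM]
      exact hF2 (-1) (s - 1)
    · exact hF3 s
  -- F5 : A⁻¹ B^k A^s ∈ T
  have hU6 : w ^ (2 : ℤ) * u ^ (1 : ℤ) = u ^ (-1 : ℤ) * w ^ (-2 : ℤ) * ζ := by
    calc w ^ (2 : ℤ) * u ^ (1 : ℤ) = u⁻¹ * (ε * u ^ (-2 : ℤ)) * ε := by rw [hw2]; group
    _ = u⁻¹ * (w ^ (-2 : ℤ) * ε) * ε := by rw [hcu (-2)]
    _ = u ^ (-1 : ℤ) * w ^ (-2 : ℤ) * ζ := by rw [hζ]; group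
  have hF5 : ∀ k s : ℤ, (↑(u ^ (-1 : ℤ)) : Mat) * (↑(w ^ k) : Mat) * (↑(u ^ s) : Mat) ∈ T := by
    intro k s
    refine mem_span_mul_both _ _ (hLw (-2) k) ?_
    rintro z ⟨i, hi, rfl⟩
    simp only [Set.mem_Iio] at hi
    beta_reduce
    have hi3 : i ≤ 3 := by omega
    set j : ℤ := -2 + (i : ℤ) with hj
    have hj1 : -2 ≤ j := by omega
    have hj2 : j ≤ 1 := by omega
    clear_value j
    clear hj hi hi3
    interval_cases j
    · -- j = -2
      have hcm : ζ⁻¹ * u ^ s = u ^ s * ζ⁻¹ := ((hCu.zpow_right s).inv_left).eq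
      have hid : u ^ (-1 : ℤ) * w ^ (-2 : ℤ) * u ^ s
          = w ^ (2 : ℤ) * u ^ (1 + s) * ζ⁻¹ := by
        calc u ^ (-1 : ℤ) * w ^ (-2 : ℤ) * u ^ s
            = (u ^ (-1 : ℤ) * w ^ (-2 : ℤ) * ζ) * (ζ⁻¹ * u ^ s) := by group
        _ = (w ^ (2 : ℤ) * u ^ (1 : ℤ)) * (u ^ s * ζ⁻¹) := by rw [← hU6, hcm]
        _ = w ^ (2 : ℤ) * u ^ (1 + s) * ζ⁻¹ := by group
      have hidM := congrArg Units.val hid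
      simp only [Units.val_mul] at hidM
      rw [hidM, hζinv, mul_smul_comm, mul_one]
      exact T.smul_mem _ (hF3 (1 + s))
    · -- j = -1
      have hid : u ^ (-1 : ℤ) * w ^ (-1 : ℤ) * u ^ s = u ^ (0 : ℤ) * ε⁻¹ * u ^ (1 + s) := by
        rw [hwdef]; group
      have hidM := congrArg Units.val hid
      simp only [Units.val_mul] at hidM
      rw [hidM, hεinv, mul_smul_comm, smul_mul_assoc]
      exact T.smul_mem _ (hF2 0 (1 + s))
    · -- j = 0
      simp only [zpow_zero, Units.val_one, mul_one]
      rw [← Units.val_mul, ← _root_.zpow_add]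
      exact hF1 _
    · -- j = 1
      have hid : u ^ (-1 : ℤ) * w ^ (1 : ℤ) * u ^ s = u ^ (-2 : ℤ) * ε * u ^ (s - 1) := by
        rw [hwdef]; group
      have hidM := congrArg Units.val hid
      simp only [Units.val_mul] at hidM
      rw [hidM]
      exact hF2 (-2) (s - 1)
  -- closure checks
  have hcheckA : ∀ z ∈ (G : Set Mat), (↑u : Mat) * z ∈ T := by
    intro z hz
    simp only [hG, Finset.coe_union, Set.mem_union, Finset.coe_image, Set.mem_image,
      Finset.mem_coe, Finset.mem_range, Finset.mem_product] at hz
    rcases hz with (⟨i, hi, rfl⟩ | ⟨⟨i, j⟩, ⟨hi, hj⟩, rfl⟩) | ⟨t, ht, rfl⟩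
    all_goals beta_reduce
    · have hid : u * u ^ (i : ℤ) = u ^ (1 + (i : ℤ)) := by group
      have hidM := congrArg Units.val hid
      simp only [Units.val_mul] at hidM
      rw [hidM]
      exact hF1 _
    · have hid : u * (u ^ (i : ℤ) * ε * u ^ (j : ℤ))
          = u ^ (1 + (i : ℤ)) * ε * u ^ (j : ℤ) := by group
      have hidM := congrArg Units.val hid
      simp only [Units.val_mul] at hidM
      rw [hidM]
      exact hF2 _ _
    · have hcm : ζ * u ^ ((t : ℤ) - 1) = u ^ ((t : ℤ) - 1) * ζ := (hCu.zpow_right _).eq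
      have hid : u * (w ^ (2 : ℤ) * u ^ (t : ℤ))
          = w ^ (-2 : ℤ) * u ^ ((t : ℤ) - 1) * ζ := by
        calc u * (w ^ (2 : ℤ) * u ^ (t : ℤ))
            = (ε * u ^ (-2 : ℤ)) * ε * u ^ ((t : ℤ) - 1) := by rw [hw2]; group
        _ = (w ^ (-2 : ℤ) * ε) * ε * u ^ ((t : ℤ) - 1) := by rw [hcu (-2)]
        _ = w ^ (-2 : ℤ) * (ζ * u ^ ((t : ℤ) - 1)) := by rw [hζ]; group
        _ = w ^ (-2 : ℤ) * (u ^ ((t : ℤ) - 1) * ζ) := by rw [hcm]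
        _ = w ^ (-2 : ℤ) * u ^ ((t : ℤ) - 1) * ζ := by group
      have hidM := congrArg Units.val hid
      simp only [Units.val_mul] at hidM
      rw [hidM, hc, mul_smul_comm, mul_one]
      exact T.smul_mem _ (hF4 (-2) _)
  have hcheckB : ∀ z ∈ (G : Set Mat), (↑w : Mat) * z ∈ T := by
    intro z hz
    simp only [hG, Finset.coe_union, Set.mem_union, Finset.coe_image, Set.mem_image,
      Finset.mem_coe, Finset.mem_range, Finset.mem_product] at hz
    rcases hz with (⟨i, hi, rfl⟩ | ⟨⟨i, j⟩, ⟨hi, hj⟩, rfl⟩) | ⟨t, ht, rfl⟩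
    all_goals beta_reduce
    · have hid : w * u ^ (i : ℤ) = u ^ (-1 : ℤ) * ε * u ^ ((i : ℤ) - 1) := by
        rw [hwdef]; group
      have hidM := congrArg Units.val hid
      simp only [Units.val_mul] at hidM
      rw [hidM]
      exact hF2 _ _
    · have hcm : ζ * u ^ (j : ℤ) = u ^ (j : ℤ) * ζ := (hCu.zpow_right _).eq
      have h3 : ε * u ^ ((i : ℤ) - 1) * ε = w ^ ((i : ℤ) - 1) * ζ := by
        rw [hcu ((i : ℤ) - 1), hζ]; group
      have hid : w * (u ^ (i : ℤ) * ε * u ^ (j : ℤ))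
          = (u ^ (-1 : ℤ) * w ^ ((i : ℤ) - 1) * u ^ (j : ℤ)) * ζ := by
        calc w * (u ^ (i : ℤ) * ε * u ^ (j : ℤ))
            = u⁻¹ * (ε * u ^ ((i : ℤ) - 1) * ε) * u ^ (j : ℤ) := by rw [hwdef]; group
        _ = u⁻¹ * (w ^ ((i : ℤ) - 1) * ζ) * u ^ (j : ℤ) := by rw [h3]
        _ = u⁻¹ * w ^ ((i : ℤ) - 1) * (ζ * u ^ (j : ℤ)) := by group
        _ = u⁻¹ * w ^ ((i : ℤ) - 1) * (u ^ (j : ℤ) * ζ) := by rw [hcm]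
        _ = (u ^ (-1 : ℤ) * w ^ ((i : ℤ) - 1) * u ^ (j : ℤ)) * ζ := by group
      have hidM := congrArg Units.val hid
      simp only [Units.val_mul] at hidM
      rw [hidM, hc, mul_smul_comm, mul_one]
      exact T.smul_mem _ (hF5 _ _)
    · have hid : w * (w ^ (2 : ℤ) * u ^ (t : ℤ)) = w ^ (3 : ℤ) * u ^ (t : ℤ) := by group
      have hidM := congrArg Units.val hid
      simp only [Units.val_mul] at hidM
      rw [hidM]
      exact hF4 3 _
  -- everything is in T
  have hspanmul : ∀ x : Mat, (∀ z ∈ (G : Set Mat), x * z ∈ T) → ∀ y ∈ T, x * y ∈ T := by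
    intro x hx y hy
    induction hy using Submodule.span_induction with
    | mem z hz => exact hx z hz
    | zero => rw [mul_zero]; exact T.zero_mem
    | add a b _ _ ha hb => rw [mul_add]; exact T.add_mem ha hb
    | smul r a _ ha => rw [mul_smul_comm]; exact T.smul_mem r ha
  have hmain : ∀ x : Mat, x ∈ Algebra.adjoin ℂ ({(↑u : Mat), (↑w : Mat)} : Set Mat) →
      ∀ y ∈ T, x * y ∈ T := by
    intro x hx
    induction hx using Algebra.adjoin_induction with
    | mem z hz =>
      rcases hz with rfl | rfl
      · exact hspanmul _ hcheckA
      · exact hspanmul _ hcheckB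
    | algebraMap r =>
      intro y hy
      rw [Algebra.algebraMap_eq_smul_one, smul_mul_assoc, one_mul]
      exact T.smul_mem r hy
    | add a b _ _ ha hb =>
      intro y hy
      rw [add_mul]
      exact T.add_mem (ha y hy) (hb y hy)
    | mul a b _ _ ha hb =>
      intro y hy
      rw [mul_assoc]
      exact ha _ (hb y hy)
  have h1T : (1 : Mat) ∈ T := by
    have := hF1 0
    simpa using this
  have hTop : ∀ x : Mat, x ∈ T := by
    intro x
    have hx : x ∈ Algebra.adjoin ℂ ({(↑u : Mat), (↑w : Mat)} : Set Mat) := by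
      rw [hsimple]; exact Algebra.mem_top
    have := hmain x hx 1 h1T
    simpa using this
  -- dimension count
  have hspan_top : Submodule.span ℂ (G : Set Mat) = ⊤ := by
    rw [Submodule.eq_top_iff']
    exact fun x => hTop x
  have h4 : d * d ≤ G.card := by
    have h3 := finrank_span_finset_le_card (R := ℂ) (M := Mat) G
    have heq : Module.finrank ℂ Mat = d * d := by
      show Module.finrank ℂ (Matrix (Fin d) (Fin d) ℂ) = d * d
      rw [Module.finrank_matrix]
      simp
    calc d * d = Module.finrank ℂ Mat := heq.symm
    _ = Module.finrank ℂ (⊤ : Submodule ℂ Mat) := (finrank_top ℂ Mat).symm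
    _ = Module.finrank ℂ (Submodule.span ℂ (G : Set Mat)) := by rw [hspan_top]
    _ ≤ G.card := h3
  have h5 : G.card ≤ p + p * p + p := by
    rw [hG]
    refine (Finset.card_union_le _ _).trans ?_
    have c3 : ((range p).image fun t : ℕ => (↑(w ^ (2 : ℤ)) : Mat) * (↑(u ^ (t : ℤ)) : Mat)).card ≤ p :=
      le_trans Finset.card_image_le (by simp)
    have c12 : (((range p).image fun i : ℕ => (↑(u ^ (i : ℤ)) : Mat)) ∪
        ((range p ×ˢ range p).image fun ij : ℕ × ℕ =>
          (↑(u ^ (ij.1 : ℤ)) : Mat) * (↑ε : Mat) * (↑(u ^ (ij.2 : ℤ)) : Mat))).card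
        ≤ p + p * p := by
      refine (Finset.card_union_le _ _).trans ?_
      have c1 : ((range p).image fun i : ℕ => (↑(u ^ (i : ℤ)) : Mat)).card ≤ p :=
        le_trans Finset.card_image_le (by simp)
      have c2 : (((range p ×ˢ range p)).image fun ij : ℕ × ℕ =>
          (↑(u ^ (ij.1 : ℤ)) : Mat) * (↑ε : Mat) * (↑(u ^ (ij.2 : ℤ)) : Mat)).card ≤ p * p :=
        le_trans Finset.card_image_le (by simp)
      omega
    omega
  have hfin : d * d ≤ p + p * p + p := le_trans h4 h5
  have hsq : (p + 1) * (p + 1) ≤ d * d := Nat.mul_le_mul hcon hcon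
  have hexp : (p + 1) * (p + 1) = p * p + 2 * p + 1 := by ring
  rw [hexp] at hsq
  linarith

/-- for a simple representation of `B₃` of dimension `1 ≤ d ≤ 5`, the minimal
polynomial of `A` equals its characteristic polynomial (likewise for `B`); consequently any
diagonalization of `A` has pairwise distinct diagonal entries. -/
theorem minpoly_eq_charpoly {d : ℕ} (hd : 1 ≤ d) (hd5 : d ≤ 5)
    (A B : Matrix (Fin d) (Fin d) ℂ)
    (hA : IsUnit A) (hB : IsUnit B)
    (hbraid : A * B * A = B * A * B)
    (hsimple : Algebra.adjoin ℂ ({A, B} : Set (Matrix (Fin d) (Fin d) ℂ)) = ⊤) :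
    minpoly ℂ A = A.charpoly ∧ minpoly ℂ B = B.charpoly ∧
    ∀ (P : Matrix (Fin d) (Fin d) ℂ) (lam : Fin d → ℂ), IsUnit P →
      A = P * Matrix.diagonal lam * P⁻¹ → Function.Injective lam := by
  haveI : NeZero d := ⟨by omega⟩
  have hdegA : d ≤ (minpoly ℂ A).natDegree := key_degree hd hd5 A B hA hB hbraid hsimple
  have hsimple' : Algebra.adjoin ℂ ({B, A} : Set (Matrix (Fin d) (Fin d) ℂ)) = ⊤ := by
    rwa [Set.pair_comm]
  have hdegB : d ≤ (minpoly ℂ B).natDegree :=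
    key_degree hd hd5 B A hB hA hbraid.symm hsimple'
  have key : ∀ M : Matrix (Fin d) (Fin d) ℂ, d ≤ (minpoly ℂ M).natDegree →
      minpoly ℂ M = M.charpoly := by
    intro M hdeg
    have hM : IsIntegral ℂ M := IsIntegral.of_finite ℂ M
    have hdvd : minpoly ℂ M ∣ M.charpoly := Matrix.minpoly_dvd_charpoly M
    have hmonic := minpoly.monic hM
    have hcm : M.charpoly.Monic := Matrix.charpoly_monic M
    obtain ⟨q, hq⟩ := hdvd
    have hchdeg : M.charpoly.natDegree = d := by
      rw [Matrix.charpoly_natDegree_eq_dim]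
      simp
    have hq0 : q ≠ 0 := by
      rintro rfl
      rw [mul_zero] at hq
      exact hcm.ne_zero hq
    have hdq : (minpoly ℂ M).natDegree + q.natDegree = d := by
      have h5 : M.charpoly.natDegree = (minpoly ℂ M).natDegree + q.natDegree := by
        rw [hq, natDegree_mul hmonic.ne_zero hq0]
      omega
    have hqd : q.natDegree = 0 := by omega
    have hqmonic : q.Monic := hmonic.of_mul_monic_left (hq ▸ hcm)
    have hq1 : q = 1 := hqmonic.natDegree_eq_zero.mp hqd
    rw [hq, hq1, mul_one]
  refine ⟨key A hdegA, key B hdegB, ?_⟩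
  intro P lam hP hAP
  obtain ⟨Pu, rfl⟩ := hP
  have hAP2 : A = (↑Pu : Matrix (Fin d) (Fin d) ℂ) * Matrix.diagonal lam
      * (↑(Pu⁻¹) : Matrix (Fin d) (Fin d) ℂ) := by
    rw [hAP, Matrix.coe_units_inv]
  have hmd : (minpoly ℂ (Matrix.diagonal lam)).natDegree = (minpoly ℂ A).natDegree := by
    rw [hAP2, minpoly_conj]
  have hdegD : d ≤ (minpoly ℂ (Matrix.diagonal lam)).natDegree := by
    rw [hmd]; exact hdegA
  set q : Polynomial ℂ := ∏ v ∈ Finset.image lam Finset.univ, (X - C v) with hqdef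
  have hqmonic : q.Monic := monic_prod_of_monic _ _ fun v _ => monic_X_sub_C v
  have haev0 : (aeval lam) q = 0 := by
    funext i
    have h1 : ((aeval lam) q) i = (aeval (lam i)) q :=
      (Polynomial.aeval_algHom_apply (Pi.evalAlgHom ℂ (fun _ => ℂ) i) lam q).symm
    rw [Pi.zero_apply, h1, hqdef, map_prod]
    refine Finset.prod_eq_zero (Finset.mem_image_of_mem lam (Finset.mem_univ i)) ?_
    simp
  have haev : aeval (Matrix.diagonal lam) q = 0 := by
    have h2 : Matrix.diagonal lam = (Matrix.diagonalAlgHom ℂ lam : Matrix (Fin d) (Fin d) ℂ) := rfl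
    rw [h2, Polynomial.aeval_algHom_apply, haev0, map_zero]
  have hdvd2 : minpoly ℂ (Matrix.diagonal lam) ∣ q := minpoly.dvd ℂ _ haev
  have hqdeg : q.natDegree = (Finset.image lam Finset.univ).card := by
    rw [hqdef, natDegree_prod _ _ fun v _ => X_sub_C_ne_zero v]
    simp
  have hled : d ≤ (Finset.image lam Finset.univ).card := by
    calc d ≤ (minpoly ℂ (Matrix.diagonal lam)).natDegree := hdegD
    _ ≤ q.natDegree := Polynomial.natDegree_le_of_dvd hdvd2 hqmonic.ne_zero
    _ = _ := hqdeg
  have hcard : (Finset.image lam Finset.univ).card = (Finset.univ : Finset (Fin d)).card := by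
    have h3 : (Finset.image lam Finset.univ).card ≤ Finset.univ.card :=
      Finset.card_image_le (s := (Finset.univ : Finset (Fin d))) (f := lam)
    have h4 : (Finset.univ : Finset (Fin d)).card = d := by simp
    omega
  have hinj : Set.InjOn lam (Finset.univ : Finset (Fin d)) :=
    Finset.card_image_iff.mp hcard
  intro a b hab
  exact hinj (by simp) (by simp) hab
end

section
/- Let λ_1, λ_2 ∈ ℂ be nonzero scalars with λ_1² − λ_1·λ_2 + λ_2² ≠ 0. Then there exists a simple 2-dimensional representation of B_3 whose first generator has eigenvalues λ_1 and λ_2; that is, there exist invertible matrices A, B ∈ M_2(ℂ) with A·B·A = B·A·B, the characteristic polynomial of A equal to (x − λ_1)(x − λ_2), and the ℂ-subalgebra of M_2(ℂ) generated by A and B equal to M_2(ℂ). -/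
/-!
Take `A = !![λ₁, 1; 0, λ₂]` upper triangular and `B = !![λ₂, 0; -λ₁λ₂, λ₁]` lower triangular with
the diagonal reversed; the braid relation is a direct computation. For simplicity, the product
`(A - λ₂)(B - λ₁)` is `-(λ₁² - λ₁λ₂ + λ₂²)` times the matrix unit `E₀₀`, so `E₀₀` lies in the
algebra generated by `A` and `B`; then `E₁₁ = 1 - E₀₀`, and `E₀₀ A E₁₁`, `E₁₁ B E₀₀` are nonzero
multiples of `E₀₁`, `E₁₀` because `A₀₁ = 1` and `B₁₀ = -λ₁λ₂ ≠ 0`.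
-/

open Matrix Polynomial

variable {n K R : Type*}

theorem Matrix.single_one_one_eq_one_sub [CommRing R] :
    single (1 : Fin 2) (1 : Fin 2) (1 : R) = 1 - single 0 0 1 := by
  ext i j; fin_cases i <;> fin_cases j <;> simp

namespace Subalgebra

theorem eq_top_of_forall_single_mem [Fintype n] [DecidableEq n] [CommSemiring R]
    {S : Subalgebra R (Matrix n n R)} (h : ∀ i j, single i j (1 : R) ∈ S) : S = ⊤ := by
  refine eq_top_iff.2 fun M _ => ?_
  rw [matrix_eq_sum_single M]
  refine Subalgebra.sum_mem _ fun i _ => Subalgebra.sum_mem _ fun j _ => ?_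
  simpa [smul_single] using Subalgebra.smul_mem S (h i j) (M i j)

theorem single_mem_of_single_mem_of_apply_ne_zero [Fintype n] [DecidableEq n] [Field K]
    {S : Subalgebra K (Matrix n n K)} {i j : n} {M : Matrix n n K}
    (hi : single i i 1 ∈ S) (hj : single j j 1 ∈ S) (hM : M ∈ S) (hMij : M i j ≠ 0) :
    single i j (1 : K) ∈ S := by
  have : (M i j)⁻¹ • (single i i 1 * M * single j j 1) = single i j 1 := by
    rw [single_mul_mul_single, smul_single, one_mul, mul_one, smul_eq_mul, inv_mul_cancel₀ hMij]
  exact this ▸ S.smul_mem (mul_mem (mul_mem hi hM) hj) _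

theorem eq_top_of_single_zero_zero_mem [Field K]
    {S : Subalgebra K (Matrix (Fin 2) (Fin 2) K)} {M N : Matrix (Fin 2) (Fin 2) K}
    (h00 : single 0 0 1 ∈ S) (hM : M ∈ S) (hN : N ∈ S) (hM01 : M 0 1 ≠ 0) (hN10 : N 1 0 ≠ 0) :
    S = ⊤ := by
  have h11 : single 1 1 1 ∈ S := single_one_one_eq_one_sub (R := K) ▸ sub_mem (one_mem S) h00
  refine eq_top_of_forall_single_mem fun i j => ?_
  fin_cases i <;> fin_cases j
  · exact h00
  · exact single_mem_of_single_mem_of_apply_ne_zero h00 h11 hM hM01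
  · exact single_mem_of_single_mem_of_apply_ne_zero h11 h00 hN hN10
  · exact h11

end Subalgebra

section BraidRep

variable [CommRing R]

def braidMatrixA (l1 l2 : R) : Matrix (Fin 2) (Fin 2) R := !![l1, 1; 0, l2]

def braidMatrixB (l1 l2 : R) : Matrix (Fin 2) (Fin 2) R := !![l2, 0; -(l1 * l2), l1]

theorem braidMatrix_braid_relation (l1 l2 : R) :
    braidMatrixA l1 l2 * braidMatrixB l1 l2 * braidMatrixA l1 l2 =
      braidMatrixB l1 l2 * braidMatrixA l1 l2 * braidMatrixB l1 l2 := by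
  ext i j
  fin_cases i <;> fin_cases j <;> simp [braidMatrixA, braidMatrixB] <;> ring

theorem det_braidMatrixA (l1 l2 : R) : (braidMatrixA l1 l2).det = l1 * l2 := by
  simp [braidMatrixA, det_fin_two_of]

theorem det_braidMatrixB (l1 l2 : R) : (braidMatrixB l1 l2).det = l1 * l2 := by
  simp [braidMatrixB, det_fin_two_of, mul_comm]

theorem charpoly_braidMatrixA (l1 l2 : R) :
    (braidMatrixA l1 l2).charpoly = (X - C l1) * (X - C l2) := by
  simp [charpoly, det_fin_two, charmatrix_apply_eq, charmatrix_apply_ne, braidMatrixA]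

theorem braidMatrixA_sub_mul_braidMatrixB_sub (l1 l2 : R) :
    (braidMatrixA l1 l2 - l2 • 1) * (braidMatrixB l1 l2 - l1 • 1) =
      -(l1 ^ 2 - l1 * l2 + l2 ^ 2) • single 0 0 1 := by
  ext i j
  fin_cases i <;> fin_cases j <;> simp [braidMatrixA, braidMatrixB, mul_apply, Fin.sum_univ_two]
  ring

theorem adjoin_braidMatrix_eq_top [Field K] {l1 l2 : K} (h1 : l1 ≠ 0) (h2 : l2 ≠ 0)
    (hQ : l1 ^ 2 - l1 * l2 + l2 ^ 2 ≠ 0) :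
    Algebra.adjoin K {braidMatrixA l1 l2, braidMatrixB l1 l2} = ⊤ := by
  set S := Algebra.adjoin K {braidMatrixA l1 l2, braidMatrixB l1 l2}
  have hA : braidMatrixA l1 l2 ∈ S := Algebra.subset_adjoin (by simp)
  have hB : braidMatrixB l1 l2 ∈ S := Algebra.subset_adjoin (by simp)
  have h00 : single 0 0 1 ∈ S := by
    have hP := braidMatrixA_sub_mul_braidMatrixB_sub l1 l2
    rw [← inv_smul_smul₀ (neg_ne_zero.2 hQ) (single 0 0 1), ← hP]
    exact S.smul_mem (mul_mem (sub_mem hA (S.smul_mem (one_mem S) _))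
      (sub_mem hB (S.smul_mem (one_mem S) _))) _
  exact Subalgebra.eq_top_of_single_zero_zero_mem h00 hA hB (by simp [braidMatrixA])
    (by simp [braidMatrixB, h1, h2])

end BraidRep

/-- for nonzero `λ₁, λ₂ ∈ ℂ` with `λ₁² − λ₁λ₂ + λ₂² ≠ 0`, there exists a simple
2-dimensional representation of `B₃` whose first generator has characteristic polynomial
`(x − λ₁)(x − λ₂)`. -/
theorem exists_simple_dim2_rep (l1 l2 : ℂ) (h1 : l1 ≠ 0) (h2 : l2 ≠ 0)
    (hQ : l1 ^ 2 - l1 * l2 + l2 ^ 2 ≠ 0) :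
    ∃ A B : Matrix (Fin 2) (Fin 2) ℂ, IsUnit A ∧ IsUnit B ∧
      A * B * A = B * A * B ∧
      A.charpoly = (X - C l1) * (X - C l2) ∧
      Algebra.adjoin ℂ ({A, B} : Set (Matrix (Fin 2) (Fin 2) ℂ)) = ⊤ := by
  have hdet : IsUnit (l1 * l2) := (mul_ne_zero h1 h2).isUnit
  exact ⟨braidMatrixA l1 l2, braidMatrixB l1 l2,
    (isUnit_iff_isUnit_det _).2 (det_braidMatrixA l1 l2 ▸ hdet),
    (isUnit_iff_isUnit_det _).2 (det_braidMatrixB l1 l2 ▸ hdet),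
    braidMatrix_braid_relation l1 l2, charpoly_braidMatrixA l1 l2,
    adjoin_braidMatrix_eq_top h1 h2 hQ⟩
end
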